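/- arXiv:2401.00645 — 3 statements merged into one kernel-verified Lean document; each statement's English description precedes it below -/
import Mathlib

section
/- Let f : ℝ × ℝ → ℝ be bounded with f(t, t) = 0 for all t, f(a + 2π, b + 2π) = f(a, b) for all a ≤ b ≤ a + 2π, and suppose that for all real numbers a ≤ b ≤ c ≤ d ≤ a + 2π one has f(a, c) + f(b, d) ≤ f(a, d) + f(b, c). For each integer n ≥ 3 let m_n := inf over all nondecreasing sequences t₀ ≤ t₁ ≤ … ≤ t_n with t_n = t₀ + 2π of the sum Σ_{i=0}^{n−1} f(t_i, t_{i+1}). Then the sequence (m_n) is convex: m_{n−1} + m_{n+1} ≥ 2·m_n for every n ≥ 4. -/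
/-!
Lift tilings of the circle to nondecreasing sequences on the line. Take tilings `a` with `n - 1`
arcs and `b` with `n + 1` arcs. Since `b` has two more arcs than `a`, a discrete intermediate
value argument finds two arcs of `b` nested in arcs of `a` with the same offset,
`[b k, b (k+1)] ⊆ [a j, a (j+1)]` and `[b (k+J+1), b (k+J+2)] ⊆ [a (j+J), a (j+J+1)]`.
Exchanging the stretches of `a` and `b` between these two nestings gives two tilings with `n`
arcs each, and the submodularity inequality, applied once at each nesting, shows that together
they cost at most as much as `a` and `b`; taking infima over `a` and `b` concludes.
-/

open Real Finset

theorem Function.Periodic.sum_range_add {M : Type*} [AddCancelCommMonoid M] {g : ℕ → M} {n : ℕ}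
    (hg : Function.Periodic g n) (s : ℕ) :
    ∑ i ∈ range n, g (s + i) = ∑ i ∈ range n, g i := by
  induction s with
  | zero => simp
  | succ s ih =>
    rw [← ih]
    apply add_right_cancel (b := g s)
    have h := sum_range_succ' (fun i => g (s + i)) n
    rw [sum_range_succ, hg s] at h
    simpa only [add_zero, add_assoc, add_comm 1] using h.symm

theorem exists_lt_le_succ {α : Type*} [LinearOrder α] {t : ℕ → α} {c : α} {L : ℕ}
    (h0 : t 0 < c) (hL : c ≤ t L) : ∃ i < L, t i < c ∧ c ≤ t (i + 1) := by
  induction L with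
  | zero => exact absurd hL (not_le.2 h0)
  | succ L ih =>
    by_cases h : c ≤ t L
    · obtain ⟨i, hi, hc⟩ := ih h
      exact ⟨i, by omega, hc⟩
    · exact ⟨L, by omega, not_le.1 h, hL⟩

namespace Dowker

def chainSum (f : ℝ × ℝ → ℝ) (t : ℕ → ℝ) (n : ℕ) : ℝ := ∑ i ∈ range n, f (t i, t (i + 1))

-- An `n`-arc tiling `t 0 ≤ ⋯ ≤ t n = t 0 + 2π`; the values after `t n` do not enter `chainSum`.
def IsArcTiling (t : ℕ → ℝ) (n : ℕ) : Prop := Monotone t ∧ t n = t 0 + 2 * π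

def IsPeriodicTiling (t : ℕ → ℝ) (n : ℕ) : Prop := Monotone t ∧ ∀ i, t (i + n) = t i + 2 * π

def tilingSums (f : ℝ × ℝ → ℝ) (n : ℕ) : Set ℝ :=
  (fun t => chainSum f t n) '' {t | IsArcTiling t n}

section Tilings

variable {f : ℝ × ℝ → ℝ}

theorem IsArcTiling.pos {t : ℕ → ℝ} {n : ℕ} (ht : IsArcTiling t n) : 0 < n := by
  by_contra! h
  have := ht.2
  simp_all [pi_ne_zero]

theorem IsPeriodicTiling.isArcTiling {t : ℕ → ℝ} {n : ℕ} (ht : IsPeriodicTiling t n) :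
    IsArcTiling t n :=
  ⟨ht.1, by simpa using ht.2 0⟩

theorem IsPeriodicTiling.shift {t : ℕ → ℝ} {n : ℕ} (ht : IsPeriodicTiling t n) (s : ℕ) :
    IsPeriodicTiling (fun i => t (s + i)) n :=
  ⟨fun _ _ h => ht.1 (by omega), fun i => by simpa [add_assoc] using ht.2 (s + i)⟩

theorem IsPeriodicTiling.add_mul {t : ℕ → ℝ} {n : ℕ} (ht : IsPeriodicTiling t n) (i q : ℕ) :
    t (i + n * q) = t i + 2 * π * q := by
  induction q with
  | zero => simp
  | succ q ih =>
    rw [mul_add_one, ← add_assoc, ht.2, ih]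
    push_cast
    ring

theorem IsPeriodicTiling.exists_lt {t : ℕ → ℝ} {n : ℕ} (ht : IsPeriodicTiling t n) (x : ℝ) :
    ∃ i, x < t i := by
  obtain ⟨q, hq⟩ := exists_nat_gt ((x - t 0) / (2 * π))
  refine ⟨n * q, ?_⟩
  have h := ht.add_mul 0 q
  rw [zero_add] at h
  rw [div_lt_iff₀ (by positivity)] at hq
  linarith

theorem IsPeriodicTiling.le_add_two_pi {t : ℕ → ℝ} {n : ℕ} (ht : IsPeriodicTiling t n)
    (i : ℕ) : t (i + 1) ≤ t i + 2 * π :=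
  ht.2 i ▸ ht.1 (by have := ht.isArcTiling.pos; omega)

theorem chainSum_shift
    (hper : ∀ a b : ℝ, a ≤ b → b ≤ a + 2 * π → f (a + 2 * π, b + 2 * π) = f (a, b))
    {t : ℕ → ℝ} {n : ℕ} (ht : IsPeriodicTiling t n) (s : ℕ) :
    chainSum f (fun i => t (s + i)) n = chainSum f t n := by
  have hperiodic : Function.Periodic (fun i => f (t i, t (i + 1))) n := fun i => by
    simp only [add_right_comm i n 1, ht.2]
    exact hper _ _ (ht.1 (by omega)) (ht.le_add_two_pi i)
  simpa only [chainSum, add_assoc] using hperiodic.sum_range_add s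

noncomputable def periodicExtension (t : ℕ → ℝ) (n i : ℕ) : ℝ :=
  t (i % n) + 2 * π * (i / n : ℕ)

theorem periodicExtension_mul_add {t : ℕ → ℝ} {n : ℕ} (ht : IsArcTiling t n) {r : ℕ}
    (hr : r ≤ n) (q : ℕ) : periodicExtension t n (n * q + r) = t r + 2 * π * q := by
  have hlt : ∀ {r q}, r < n → periodicExtension t n (n * q + r) = t r + 2 * π * q := by
    intro r q hr
    simp [periodicExtension, Nat.mod_eq_of_lt hr, Nat.mul_add_div ht.pos, Nat.div_eq_of_lt hr]
  rcases hr.lt_or_eq with hr | rfl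
  · exact hlt hr
  · rw [← mul_add_one, ← add_zero (r * (q + 1)), hlt ht.pos, ht.2]
    push_cast
    ring

theorem IsArcTiling.isPeriodicTiling_periodicExtension {t : ℕ → ℝ} {n : ℕ}
    (ht : IsArcTiling t n) : IsPeriodicTiling (periodicExtension t n) n := by
  have hmod : ∀ i, i % n < n := fun i => Nat.mod_lt i ht.pos
  have hdecomp : ∀ i, i = n * (i / n) + i % n := fun i => (Nat.div_add_mod i n).symm
  refine ⟨monotone_nat_of_le_succ fun i => ?_, fun i => ?_⟩
  · rw [hdecomp i, add_assoc, periodicExtension_mul_add ht (hmod i).le,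
      periodicExtension_mul_add ht (hmod i)]
    gcongr
    exact ht.1 (Nat.le_succ _)
  · rw [hdecomp i, add_right_comm, ← mul_add_one, periodicExtension_mul_add ht (hmod i).le,
      periodicExtension_mul_add ht (hmod i).le]
    push_cast
    ring

theorem chainSum_periodicExtension {t : ℕ → ℝ} {n : ℕ} (ht : IsArcTiling t n) :
    chainSum f (periodicExtension t n) n = chainSum f t n := by
  have hagree : ∀ i ≤ n, periodicExtension t n i = t i := fun i hi => by
    simpa using periodicExtension_mul_add ht hi 0
  refine sum_congr rfl fun i hi => ?_
  rw [mem_range] at hi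
  rw [hagree i hi.le, hagree (i + 1) hi]

theorem IsArcTiling.exists_isPeriodicTiling {t : ℕ → ℝ} {n : ℕ} (ht : IsArcTiling t n) :
    ∃ τ, IsPeriodicTiling τ n ∧ chainSum f τ n = chainSum f t n :=
  ⟨_, ht.isPeriodicTiling_periodicExtension, chainSum_periodicExtension ht⟩

theorem exists_nested_arcs {a b : ℕ → ℝ} {g : ℕ → ℕ} {L : ℕ} (hg : Monotone g)
    (hlo : ∀ i ≤ L, a (g i) ≤ b i) (hhi : ∀ i ≤ L, b i ≤ a (g i + 1))
    (hL : g L + 2 ≤ g 0 + L) :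
    ∃ j k J, k + J + 2 ≤ L ∧ a j ≤ b k ∧ b (k + 1) ≤ a (j + 1) ∧
      a (j + J) ≤ b (k + J + 1) ∧ b (k + J + 2) ≤ a (j + J + 1) := by
  -- `i - g i` never rises by more than one, and rises exactly when `g (i + 1) = g i`, that is,
  -- when `[b i, b (i + 1)]` lies in the single arc `[a (g i), a (g i + 1)]`.
  have hstep : ∀ i, g i ≤ g (i + 1) := fun i => hg (Nat.le_succ i)
  obtain ⟨k', hk'L, h₁, h₂⟩ := exists_lt_le_succ (t := fun i : ℕ => (i : ℤ) - g i)
    (c := 2 - g 0) (L := L) (by simp) (by simp; omega)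
  obtain ⟨k, hkk', h₃, h₄⟩ := exists_lt_le_succ (t := fun i : ℕ => (i : ℤ) - g i)
    (c := 1 - g 0) (L := k') (by simp) (by have := hstep k'; simp at h₁ h₂ ⊢; omega)
  have := hstep k
  have := hstep k'
  simp only [Nat.cast_add, Nat.cast_one] at h₁ h₂ h₃ h₄
  obtain ⟨J, rfl⟩ : ∃ J, k' = k + J + 1 := ⟨k' - k - 1, by omega⟩
  have hgk : g (k + 1) = g k := by omega
  have hgJ : g (k + J + 1) = g k + J := by omega
  have hgJ' : g (k + J + 1 + 1) = g k + J := by omega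
  refine ⟨g k, k, J, by omega, hlo k (by omega), ?_, ?_, ?_⟩
  · simpa [hgk] using hhi (k + 1) (by omega)
  · simpa [hgJ] using hlo (k + J + 1) (by omega)
  · exact hgJ' ▸ hhi (k + J + 1 + 1) (by omega)

theorem exists_nested_arcs_of_le_of_lt {a b : ℕ → ℝ} {p : ℕ} (hb : Monotone b)
    (h0 : a 0 ≤ b 0) (hp : b (p + 1) < a p) :
    ∃ j k J, J + 1 ≤ p ∧ a j ≤ b k ∧ b (k + 1) ≤ a (j + 1) ∧
      a (j + J) ≤ b (k + J + 1) ∧ b (k + J + 2) ≤ a (j + J + 1) := by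
  classical
  set g : ℕ → ℕ := fun i => Nat.findGreatest (fun j => a j ≤ b i) p
  have hlo : ∀ i, a (g i) ≤ b i := fun i =>
    Nat.findGreatest_spec (P := fun j => a j ≤ b i) (Nat.zero_le p) (h0.trans (hb (Nat.zero_le i)))
  have hlt : ∀ i ≤ p + 1, g i < p := fun i hi => by
    refine (Nat.findGreatest_le p).lt_of_ne fun h => ?_
    have hgi : g i = p := h
    linarith [hgi ▸ hlo i, hb hi]
  obtain ⟨j, k, J, hL, hnest⟩ := exists_nested_arcs (a := a) (b := b) (L := p + 1)
    (fun i i' h => Nat.findGreatest_mono_left (fun j hj => hj.trans (hb h)) p)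
    (fun i _ => hlo i)
    (fun i hi => (not_le.1 (Nat.findGreatest_is_greatest (P := fun j => a j ≤ b i)
      (Nat.lt_succ_self _) (hlt i hi))).le)
    (show g (p + 1) + 2 ≤ g 0 + (p + 1) by have := hlt (p + 1) le_rfl; omega)
  exact ⟨j, k, J, by omega, hnest⟩

def splice (x y : ℕ → ℝ) (c i : ℕ) : ℝ := if i ≤ c then x i else y i

theorem monotone_splice {x y : ℕ → ℝ} {c : ℕ} (hx : Monotone x) (hy : Monotone y)
    (hxy : x c ≤ y (c + 1)) : Monotone (splice x y c) :=
  monotone_nat_of_le_succ fun i => by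
    unfold splice
    split_ifs with h₁ h₂ h₂
    · exact hx (Nat.le_succ i)
    · rwa [show i = c by omega]
    · omega
    · exact hy (Nat.le_succ i)

theorem chainSum_splice (x y : ℕ → ℝ) {c n : ℕ} (hc : c < n) :
    chainSum f (splice x y c) n =
      chainSum f x c + f (x c, y (c + 1)) + ∑ i ∈ Ico (c + 1) n, f (y i, y (i + 1)) := by
  have hhead : ∑ i ∈ range c, f (splice x y c i, splice x y c (i + 1)) = chainSum f x c :=
    sum_congr rfl fun i hi => by
      have := mem_range.1 hi
      simp [splice, this.le, Nat.succ_le_of_lt this]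
  have htail : ∑ i ∈ Ico (c + 1) n, f (splice x y c i, splice x y c (i + 1)) =
      ∑ i ∈ Ico (c + 1) n, f (y i, y (i + 1)) :=
    sum_congr rfl fun i hi => by
      have := (mem_Ico.1 hi).1
      simp [splice, show ¬ i ≤ c by omega, show ¬ i + 1 ≤ c by omega]
  rw [chainSum, ← sum_range_add_sum_Ico _ hc, sum_range_succ, hhead, htail]
  simp [splice]

theorem chainSum_splice_const (z : ℝ) (x : ℕ → ℝ) {n : ℕ} (hn : 0 < n) :
    chainSum f (splice (fun _ => z) x 0) n = chainSum f x n - f (x 0, x 1) + f (z, x 1) := by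
  rw [chainSum_splice _ _ hn]
  simp only [chainSum]
  rw [← sum_range_add_sum_Ico _ hn]
  simp
  ring

theorem chainSum_succ (t : ℕ → ℝ) (n : ℕ) :
    chainSum f t (n + 1) = chainSum f t n + f (t n, t (n + 1)) :=
  sum_range_succ _ _

theorem chainSum_eq_add_sum_Ico (t : ℕ → ℝ) {c n : ℕ} (hc : c ≤ n) :
    chainSum f t n = chainSum f t c + ∑ i ∈ Ico c n, f (t i, t (i + 1)) :=
  (sum_range_add_sum_Ico _ hc).symm

theorem splice_const_apply_le {z c : ℝ} {x : ℕ → ℝ} {i : ℕ} (hz : z ≤ c) (hx : x i ≤ c) :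
    splice (fun _ => z) x 0 i ≤ c := by
  unfold splice
  split_ifs <;> assumption

-- `A 0, B 1, …, B (J+1), A (J+1), A (J+2), …`
def exchangeLeft (A B : ℕ → ℝ) (J : ℕ) : ℕ → ℝ :=
  splice (splice (fun _ => A 0) B 0) (fun i => A (i - 1)) (J + 1)

-- `B 0, A 1, …, A J, B (J+2), B (J+3), …`
def exchangeRight (A B : ℕ → ℝ) (J : ℕ) : ℕ → ℝ :=
  splice (splice (fun _ => B 0) A 0) (fun i => B (i + 1)) J

theorem isArcTiling_exchangeLeft {A B : ℕ → ℝ} {p J : ℕ} (hA : IsArcTiling A p)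
    (hB : Monotone B) (hJ : J + 1 ≤ p) (h₁ : A 0 ≤ B 0) (h₄ : B (J + 2) ≤ A (J + 1)) :
    IsArcTiling (exchangeLeft A B J) (p + 1) := by
  have hx := monotone_splice monotone_const hB (h₁.trans (hB (Nat.zero_le 1)))
  refine ⟨monotone_splice hx (fun i j h => hA.1 (Nat.sub_le_sub_right h 1)) ?_, ?_⟩
  · simpa [splice] using (hB (Nat.le_succ (J + 1))).trans h₄
  · simp [exchangeLeft, splice, show ¬ p ≤ J by omega, hA.2]

theorem isArcTiling_exchangeRight {A B : ℕ → ℝ} {p J : ℕ} (hA : Monotone A)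
    (hB : IsArcTiling B (p + 2)) (hJ : J + 1 ≤ p) (h₂ : B 1 ≤ A 1) (h₃ : A J ≤ B (J + 1)) :
    IsArcTiling (exchangeRight A B J) (p + 1) := by
  have hB01 := hB.1 (Nat.zero_le 1)
  refine ⟨monotone_splice (monotone_splice monotone_const hA (hB01.trans h₂))
    (fun i j h => hB.1 (by omega)) ?_, ?_⟩
  · exact (splice_const_apply_le (hB.1 (Nat.zero_le _)) h₃).trans (hB.1 (Nat.le_succ _))
  · simp [exchangeRight, splice, show ¬ p < J by omega, hB.2]

theorem chainSum_exchange_le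
    (hsub : ∀ a b c d : ℝ, a ≤ b → b ≤ c → c ≤ d → d ≤ a + 2 * π →
      f (a, c) + f (b, d) ≤ f (a, d) + f (b, c))
    {A B : ℕ → ℝ} {p J : ℕ} (hA : IsArcTiling A p) (hB : Monotone B) (hJ : J + 1 ≤ p)
    (h₁ : A 0 ≤ B 0) (h₂ : B 1 ≤ A 1) (h₃ : A J ≤ B (J + 1)) (h₄ : B (J + 2) ≤ A (J + 1)) :
    chainSum f (exchangeLeft A B J) (p + 1) + chainSum f (exchangeRight A B J) (p + 1) ≤
      chainSum f A p + chainSum f B (p + 2) := by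
  set w := splice (fun _ => B 0) A 0
  have hB01 := hB (Nat.zero_le 1)
  have hwJ : B 0 ≤ w J := by
    simpa [w, splice] using monotone_splice monotone_const hA.1 (hB01.trans h₂) (Nat.zero_le J)
  have hu_sum : chainSum f (exchangeLeft A B J) (p + 1) = chainSum f B (J + 1) - f (B 0, B 1) +
      f (A 0, B 1) + f (B (J + 1), A (J + 1)) + ∑ i ∈ Ico (J + 1) p, f (A i, A (i + 1)) := by
    rw [exchangeLeft, chainSum_splice _ _ (by omega), chainSum_splice_const _ _ (Nat.succ_pos J),
      ← sum_Ico_add' (fun i => f (A (i - 1), A (i + 1 - 1)))]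
    simp [splice]
  have hv_sum : chainSum f (exchangeRight A B J) (p + 1) = chainSum f w J + f (w J, B (J + 2)) +
      ∑ i ∈ Ico (J + 2) (p + 2), f (B i, B (i + 1)) := by
    rw [exchangeRight, chainSum_splice _ _ (by omega)]
    exact congrArg _ (sum_Ico_add' (fun i => f (B i, B (i + 1))) (J + 1) (p + 1) 1)
  have hA_sum : chainSum f A p = chainSum f w J + f (w J, A (J + 1)) - f (B 0, A 1) +
      f (A 0, A 1) + ∑ i ∈ Ico (J + 1) p, f (A i, A (i + 1)) := by
    have hw_sum : chainSum f w (J + 1) = chainSum f A (J + 1) - f (A 0, A 1) + f (B 0, A 1) :=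
      chainSum_splice_const _ _ (Nat.succ_pos J)
    rw [chainSum_succ, show w (J + 1) = A (J + 1) by simp [w, splice]] at hw_sum
    rw [chainSum_eq_add_sum_Ico A hJ]
    linarith
  have hB_sum : chainSum f B (p + 2) = chainSum f B (J + 1) + f (B (J + 1), B (J + 2)) +
      ∑ i ∈ Ico (J + 2) (p + 2), f (B i, B (i + 1)) := by
    rw [chainSum_eq_add_sum_Ico B (show J + 2 ≤ p + 2 by omega), chainSum_succ]
  have hsub₁ := hsub _ _ _ _ h₁ hB01 h₂ (hA.2 ▸ hA.1 (by omega))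
  have hsub₂ := hsub (w J) _ _ _ (splice_const_apply_le (hB (Nat.zero_le _)) h₃)
    (hB (Nat.le_succ _)) h₄ (by linarith [hA.2 ▸ hA.1 hJ])
  linarith

theorem setOf_fin_eq_tilingSums (f : ℝ × ℝ → ℝ) (n : ℕ) :
    {S : ℝ | ∃ t : Fin (n + 1) → ℝ, Monotone t ∧ t (Fin.last n) = t 0 + 2 * π ∧
      S = ∑ i : Fin n, f (t i.castSucc, t i.succ)} = tilingSums f n := by
  ext S
  constructor
  · rintro ⟨T, hT, hTn, rfl⟩
    refine ⟨fun i => T ⟨min i n, by omega⟩, ⟨fun i j h => hT (by simp [Fin.le_def]; omega), ?_⟩, ?_⟩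
    · convert hTn using 2 <;> simp [Fin.ext_iff]
    · dsimp only
      rw [chainSum, ← Fin.sum_univ_eq_sum_range
        (fun i => f (T ⟨min i n, by omega⟩, T ⟨min (i + 1) n, by omega⟩))]
      exact sum_congr rfl fun i _ => by congr <;> simp
  · rintro ⟨t, ht, rfl⟩
    exact ⟨fun i => t i, fun i j h => ht.1 h, by simpa using ht.2,
      (Fin.sum_univ_eq_sum_range (fun i => f (t i, t (i + 1))) n).symm⟩

theorem tilingSums_nonempty (f : ℝ × ℝ → ℝ) {n : ℕ} (hn : 0 < n) : (tilingSums f n).Nonempty :=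
  ⟨_, fun i => 2 * π * i / n, ⟨fun i j h => by dsimp only; gcongr, by field_simp; simp⟩, rfl⟩

theorem bddBelow_tilingSums {C : ℝ} (hbd : ∀ a b : ℝ, |f (a, b)| ≤ C) (n : ℕ) :
    BddBelow (tilingSums f n) := by
  refine ⟨-(n * C), ?_⟩
  rintro _ ⟨t, -, rfl⟩
  calc -(n * C) = ∑ _i ∈ range n, -C := by simp
    _ ≤ chainSum f t n := sum_le_sum fun i _ => neg_le_of_abs_le (hbd _ _)

theorem exists_exchange_of_isArcTiling
    (hper : ∀ a b : ℝ, a ≤ b → b ≤ a + 2 * π → f (a + 2 * π, b + 2 * π) = f (a, b))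
    (hsub : ∀ a b c d : ℝ, a ≤ b → b ≤ c → c ≤ d → d ≤ a + 2 * π →
      f (a, c) + f (b, d) ≤ f (a, d) + f (b, c))
    {a b : ℕ → ℝ} {p : ℕ} (ha : IsArcTiling a p) (hb : IsArcTiling b (p + 2)) :
    ∃ u v, IsArcTiling u (p + 1) ∧ IsArcTiling v (p + 1) ∧
      chainSum f u (p + 1) + chainSum f v (p + 1) ≤ chainSum f a p + chainSum f b (p + 2) := by
  obtain ⟨α, hα, hαa⟩ := ha.exists_isPeriodicTiling (f := f)
  obtain ⟨β, hβ, hβb⟩ := hb.exists_isPeriodicTiling (f := f)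
  obtain ⟨r, hr⟩ := hα.exists_lt (β 0)
  obtain ⟨L, hL⟩ := hβ.exists_lt (α r)
  obtain ⟨s, -, hs, hsr⟩ := exists_lt_le_succ hr hL.le
  -- the points `β (s + 1), …, β (s + p + 2)` lie in `[α r, α (r + p))`
  obtain ⟨j, k, J, hJ, h₁, h₂, h₃, h₄⟩ := exists_nested_arcs_of_le_of_lt
    (a := fun i => α (r + i)) (b := fun i => β (s + 1 + i)) (hβ.shift _).1 (by simpa using hsr)
    (show β (s + 1 + (p + 1)) < α (r + p) by
      rw [show s + 1 + (p + 1) = s + (p + 2) by ring, hβ.2, hα.2]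
      linarith)
  set A := fun i => α (r + j + i)
  set B := fun i => β (s + 1 + k + i)
  have hA : IsArcTiling A p := (hα.shift (r + j)).isArcTiling
  have hB : IsArcTiling B (p + 2) := (hβ.shift (s + 1 + k)).isArcTiling
  replace h₁ : A 0 ≤ B 0 := by simpa [A, B, add_assoc] using h₁
  replace h₂ : B 1 ≤ A 1 := by simpa [A, B, add_assoc] using h₂
  replace h₃ : A J ≤ B (J + 1) := by simpa [A, B, add_assoc] using h₃
  replace h₄ : B (J + 2) ≤ A (J + 1) := by simpa [A, B, add_assoc] using h₄
  refine ⟨_, _, isArcTiling_exchangeLeft hA hB.1 hJ h₁ h₄,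
    isArcTiling_exchangeRight hA.1 hB hJ h₂ h₃, ?_⟩
  have hsum := chainSum_exchange_le hsub hA hB.1 hJ h₁ h₂ h₃ h₄
  rwa [chainSum_shift hper hα, chainSum_shift hper hβ, hαa, hβb] at hsum

end Tilings

end Dowker

open Dowker in
theorem dowker_functional_convex_general (f : ℝ × ℝ → ℝ) (C : ℝ)
    (hbd : ∀ a b : ℝ, |f (a, b)| ≤ C)
    (hper : ∀ a b : ℝ, a ≤ b → b ≤ a + 2 * π → f (a + 2 * π, b + 2 * π) = f (a, b))
    (hsub : ∀ a b c d : ℝ, a ≤ b → b ≤ c → c ≤ d → d ≤ a + 2 * π →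
      f (a, c) + f (b, d) ≤ f (a, d) + f (b, c))
    (m : ℕ → ℝ)
    (hm : ∀ n : ℕ, m n = sInf {S : ℝ | ∃ t : Fin (n + 1) → ℝ, Monotone t ∧
      t (Fin.last n) = t 0 + 2 * π ∧
      S = ∑ i : Fin n, f (t i.castSucc, t i.succ)})
    (n : ℕ) (hn : 4 ≤ n) :
    2 * m n ≤ m (n - 1) + m (n + 1) := by
  obtain ⟨p, rfl⟩ : ∃ p, n = p + 1 := ⟨n - 1, by omega⟩
  simp only [hm, setOf_fin_eq_tilingSums, Nat.add_sub_cancel]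
  have hne_p := tilingSums_nonempty f (show 0 < p by omega)
  have hne_p2 := tilingSums_nonempty f (show 0 < p + 2 by omega)
  rw [← csInf_add hne_p (bddBelow_tilingSums hbd p) hne_p2 (bddBelow_tilingSums hbd (p + 2))]
  refine le_csInf (hne_p.add hne_p2) ?_
  rintro _ ⟨_, ⟨a, ha, rfl⟩, _, ⟨b, hb, rfl⟩, rfl⟩
  obtain ⟨u, v, hu, hv, huv⟩ := exists_exchange_of_isArcTiling hper hsub ha hb
  have hu_le := csInf_le (bddBelow_tilingSums hbd (p + 1)) ⟨u, hu, rfl⟩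
  have hv_le := csInf_le (bddBelow_tilingSums hbd (p + 1)) ⟨v, hv, rfl⟩
  dsimp only at hu_le hv_le ⊢
  linarith

/-- The Dowker-type functional lemma in angle coordinates: if `f` is bounded, vanishes on
degenerate arcs, is `2π`-periodic and submodular on arcs of the circle, then the sequence
`m_n` of infima of `n`-term cyclic sums is convex. -/
theorem dowker_functional_convex (f : ℝ × ℝ → ℝ) (C : ℝ)
    (hbd : ∀ a b : ℝ, |f (a, b)| ≤ C)
    (hzero : ∀ t : ℝ, f (t, t) = 0)
    (hper : ∀ a b : ℝ, a ≤ b → b ≤ a + 2 * π → f (a + 2 * π, b + 2 * π) = f (a, b))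
    (hsub : ∀ a b c d : ℝ, a ≤ b → b ≤ c → c ≤ d → d ≤ a + 2 * π →
      f (a, c) + f (b, d) ≤ f (a, d) + f (b, c))
    (m : ℕ → ℝ)
    (hm : ∀ n : ℕ, m n = sInf {S : ℝ | ∃ t : Fin (n + 1) → ℝ, Monotone t ∧
      t (Fin.last n) = t 0 + 2 * π ∧
      S = ∑ i : Fin n, f (t i.castSucc, t i.succ)})
    (n : ℕ) (hn : 4 ≤ n) :
    2 * m n ≤ m (n - 1) + m (n + 1) :=
  dowker_functional_convex_general f C hbd hper hsub m hm n hn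
end

section
/- Let r > 0 and λ > 0, let p ∈ ℝ² with ‖p‖ ≥ r, and let u be a unit vector orthogonal to p. For s > 0 set p(s) := p + s·u, and for 0 < s₁ < s₂ let T(s₁, s₂) := conv{0, p(s₁), p(s₂)}. Then ρ(B, T(s₁, s₂)) is nonincreasing in each variable: for all 0 < s₁ ≤ s₁' < s₂ ≤ s₂' one has ρ(B, T(s₁, s₂)) ≥ ρ(B, T(s₁', s₂')). -/
/-!
In polar coordinates around `0`, with angles measured from `p`, the triangle `T(s₁, s₂)` consists
of the points of angle `α ∈ [arctan (s₁ / ‖p‖), arctan (s₂ / ‖p‖)]` and radius at most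
`‖p‖ / cos α`, so `area (T ∩ B_ρ) = ∫ min ρ (‖p‖ / cos α) ^ 2 / 2 dα` over that range. Since
`‖p‖ ≥ r`, the set `T ∩ B` is a circular sector, and `ρ(B, T) = (r ^ 2 / 2) / ⨍ g` with
`g α = min ((1 + λ) r) (‖p‖ / cos α) ^ 2 / 2` averaged over the angular range. As `g` is
nondecreasing on `[0, π / 2)`, its average can only grow when either endpoint of the range moves
to the right.
-/

open MeasureTheory Set Metric RealInnerProductSpace

open Real intervalIntegral

namespace MonotoneOn

variable {g : ℝ → ℝ} {a b c : ℝ}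

theorem intervalIntegrable_of_subset (hg : MonotoneOn g (Icc a c)) {x y : ℝ}
    (hx : a ≤ x) (hxy : x ≤ y) (hy : y ≤ c) : IntervalIntegrable g volume x y :=
  (hg.mono (by rw [uIcc_of_le hxy]; exact Icc_subset_Icc hx hy)).intervalIntegrable

theorem mul_le_integral (hg : MonotoneOn g (Icc a b)) (hab : a ≤ b) :
    (b - a) * g a ≤ ∫ x in a..b, g x := by
  simpa using integral_mono_on hab intervalIntegrable_const
    (hg.intervalIntegrable_of_subset le_rfl hab le_rfl)
    fun x hx => hg (left_mem_Icc.mpr hab) hx hx.1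

theorem integral_le_mul (hg : MonotoneOn g (Icc a b)) (hab : a ≤ b) :
    ∫ x in a..b, g x ≤ (b - a) * g b := by
  simpa using integral_mono_on hab (hg.intervalIntegrable_of_subset le_rfl hab le_rfl)
    intervalIntegrable_const fun x hx => hg hx (right_mem_Icc.mpr hab) hx.2

theorem le_interval_average (hg : MonotoneOn g (Icc a b)) (hab : a < b) :
    g a ≤ ⨍ x in a..b, g x := by
  rw [interval_average_eq_div, le_div_iff₀ (sub_pos.mpr hab), mul_comm]
  exact hg.mul_le_integral hab.le

theorem integral_mul_sub_le (hg : MonotoneOn g (Icc a c)) (hab : a ≤ b) (hbc : b ≤ c) :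
    (∫ x in a..b, g x) * (c - b) ≤ (∫ x in b..c, g x) * (b - a) := calc
  (∫ x in a..b, g x) * (c - b) ≤ (b - a) * g b * (c - b) := by
    gcongr
    exact (hg.mono (Icc_subset_Icc le_rfl hbc)).integral_le_mul hab
  _ = (c - b) * g b * (b - a) := by ring
  _ ≤ (∫ x in b..c, g x) * (b - a) := by
    gcongr
    exact (hg.mono (Icc_subset_Icc hab le_rfl)).mul_le_integral hbc

theorem interval_average_mono_right (hg : MonotoneOn g (Icc a c)) (hab : a < b) (hbc : b ≤ c) :
    ⨍ x in a..b, g x ≤ ⨍ x in a..c, g x := by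
  rw [interval_average_eq_div, interval_average_eq_div,
    div_le_div_iff₀ (by linarith) (by linarith), ← integral_add_adjacent_intervals
      (hg.intervalIntegrable_of_subset le_rfl hab.le hbc)
      (hg.intervalIntegrable_of_subset hab.le hbc le_rfl)]
  linarith [hg.integral_mul_sub_le hab.le hbc]

theorem interval_average_mono_left (hg : MonotoneOn g (Icc a c)) (hab : a ≤ b) (hbc : b < c) :
    ⨍ x in a..c, g x ≤ ⨍ x in b..c, g x := by
  rw [interval_average_eq_div, interval_average_eq_div,
    div_le_div_iff₀ (by linarith) (by linarith), ← integral_add_adjacent_intervals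
      (hg.intervalIntegrable_of_subset le_rfl hab hbc.le)
      (hg.intervalIntegrable_of_subset hab hbc.le le_rfl)]
  linarith [hg.integral_mul_sub_le hab hbc.le]

theorem interval_average_mono {a' b' : ℝ} (hg : MonotoneOn g (Icc a b')) (ha : a ≤ a')
    (hb : b ≤ b') (hab : a < b) (hab' : a' < b') : ⨍ x in a..b, g x ≤ ⨍ x in a'..b', g x :=
  (hg.interval_average_mono_right hab hb).trans (hg.interval_average_mono_left ha hab')

end MonotoneOn

theorem lintegral_Ioc_zero_ofReal {c : ℝ} (hc : 0 ≤ c) :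
    ∫⁻ t in Ioc 0 c, ENNReal.ofReal t = ENNReal.ofReal (c ^ 2 / 2) := by
  rw [← ofReal_integral_eq_lintegral_ofReal, ← integral_of_le hc, integral_id]
  · ring_nf
  · exact (intervalIntegrable_iff_integrableOn_Ioc_of_le hc).mp intervalIntegrable_id
  · exact (ae_restrict_iff' measurableSet_Ioc).mpr (ae_of_all _ fun t ht => ht.1.le)

section PolarRegion

variable {a b : ℝ} {f : ℝ → ℝ}

def polarRegion (a b : ℝ) (f : ℝ → ℝ) : Set (ℝ × ℝ) :=
  {q | 0 < q.1 ∧ q.2 ∈ Icc a b ∧ q.1 ≤ f q.2}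

theorem measurableSet_polarRegion (hf : Measurable f) : MeasurableSet (polarRegion a b f) :=
  (measurableSet_lt measurable_const measurable_fst).inter
    ((measurable_snd measurableSet_Icc).inter
      (measurableSet_le measurable_fst (hf.comp measurable_snd)))

theorem setLIntegral_polarRegion_ofReal_fst (hf : Measurable f) (hf₀ : ∀ α ∈ Icc a b, 0 ≤ f α) :
    ∫⁻ q in polarRegion a b f, ENNReal.ofReal q.1 =
      ∫⁻ α in Icc a b, ENNReal.ofReal (f α ^ 2 / 2) := by
  rw [← lintegral_indicator (measurableSet_polarRegion hf), Measure.volume_eq_prod,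
    lintegral_prod_symm _
      (measurable_fst.ennreal_ofReal.indicator (measurableSet_polarRegion hf)).aemeasurable,
    ← lintegral_indicator measurableSet_Icc]
  refine lintegral_congr fun α => ?_
  by_cases hα : α ∈ Icc a b
  · simp only [polarRegion, indicator_apply, mem_ofPred_eq, hα, true_and, if_true]
    rw [← lintegral_Ioc_zero_ofReal (hf₀ α hα), ← lintegral_indicator measurableSet_Ioc]
    simp only [indicator_apply, mem_Ioc]
  · simp only [polarRegion, indicator_apply, mem_ofPred_eq, hα, false_and, and_false, if_false,
      lintegral_zero]

theorem volume_real_eq_integral_of_polarCoord_symm_mem_iff {S : Set (ℝ × ℝ)}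
    (hS : MeasurableSet S) (hf : Measurable f) (hf₀ : ∀ α ∈ Icc a b, 0 ≤ f α)
    (hab : a ≤ b) (habπ : Icc a b ⊆ Ioo (-π) π)
    (hSf : ∀ t α, 0 < t → α ∈ Ioo (-π) π →
      (polarCoord.symm (t, α) ∈ S ↔ α ∈ Icc a b ∧ t ≤ f α)) :
    volume.real S = ∫ α in a..b, f α ^ 2 / 2 := by
  have hE := measurableSet_polarRegion (a := a) (b := b) hf
  have hEtarget : polarRegion a b f ⊆ polarCoord.target := fun q hq => ⟨hq.1, habπ hq.2.1⟩
  have hSE : ∀ q ∈ polarCoord.target, polarCoord.symm q ∈ S ↔ q ∈ polarRegion a b f :=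
    fun q hq => (hSf q.1 q.2 hq.1 hq.2).trans ⟨fun h => ⟨hq.1, h⟩, fun h => h.2⟩
  have hvolume : volume S = ∫⁻ q in polarRegion a b f, ENNReal.ofReal q.1 := calc
    volume S = ∫⁻ q in polarCoord.target,
        ENNReal.ofReal q.1 • S.indicator 1 (polarCoord.symm q) := by
      rw [lintegral_comp_polarCoord_symm, lintegral_indicator_one hS]
    _ = ∫⁻ q in polarCoord.target,
        (polarRegion a b f).indicator (ENNReal.ofReal ∘ Prod.fst) q := by
      refine setLIntegral_congr_fun polarCoord.open_target.measurableSet fun q hq => ?_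
      by_cases hqE : q ∈ polarRegion a b f
      · rw [indicator_of_mem ((hSE q hq).mpr hqE), indicator_of_mem hqE, Pi.one_apply,
          smul_eq_mul, mul_one, Function.comp_apply]
      · rw [indicator_of_notMem (mt (hSE q hq).mp hqE), indicator_of_notMem hqE, smul_zero]
    _ = ∫⁻ q in polarRegion a b f, ENNReal.ofReal q.1 := by
      rw [setLIntegral_indicator hE, inter_eq_left.mpr hEtarget]
      rfl
  rw [measureReal_def, hvolume, setLIntegral_polarRegion_ofReal_fst hf hf₀,
    ← integral_eq_lintegral_of_nonneg_ae, integral_Icc_eq_integral_Ioc, integral_of_le hab]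
  · exact (ae_restrict_iff' measurableSet_Icc).mpr (ae_of_all _ fun α _ => by positivity)
  · exact ((hf.pow_const 2).div_const 2).aestronglyMeasurable

end PolarRegion

theorem mem_convexHull_zero_mk_mk_iff {h s₁ s₂ : ℝ} (hs : s₁ ≤ s₂) {z : ℝ × ℝ} :
    z ∈ convexHull ℝ {0, (h, s₁), (h, s₂)} ↔
      ∃ θ ∈ Icc (0 : ℝ) 1, ∃ s ∈ Icc s₁ s₂, (θ * h, θ * s) = z := by
  rw [convexHull_insert (insert_nonempty _ _), convexHull_pair, ← Prod.image_mk_segment_right,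
    segment_eq_Icc hs, convexJoin_singleton_left]
  simp only [mem_iUnion, mem_image, segment_eq_image, smul_zero, zero_add, exists_prop]
  constructor
  · rintro ⟨_, ⟨s, hs, rfl⟩, θ, hθ, rfl⟩
    exact ⟨θ, hθ, s, hs, by simp⟩
  · rintro ⟨θ, hθ, s, hs, rfl⟩
    exact ⟨_, ⟨s, hs, rfl⟩, θ, hθ, by simp⟩

theorem mem_Icc_arctan_iff {x y α : ℝ} (hα : α ∈ Ioo (-(π / 2)) (π / 2)) :
    α ∈ Icc (arctan x) (arctan y) ↔ tan α ∈ Icc x y := by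
  conv_lhs => rw [← arctan_tan hα.1 hα.2]
  simp only [mem_Icc, arctan_strictMono.le_iff_le]

theorem mem_Ioo_neg_pi_div_two_of_cos_pos {α : ℝ} (hα : α ∈ Ioo (-π) π) (hcos : 0 < cos α) :
    α ∈ Ioo (-(π / 2)) (π / 2) := by
  constructor
  · by_contra! h
    have := cos_nonpos_of_pi_div_two_le_of_le (x := -α) (by linarith) (by linarith [hα.1])
    rw [cos_neg] at this
    linarith
  · by_contra! h
    linarith [cos_nonpos_of_pi_div_two_le_of_le h (by linarith [hα.2])]

theorem polarCoord_symm_mem_convexHull_iff {h s₁ s₂ t α : ℝ} (hh : 0 < h) (hs : s₁ ≤ s₂)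
    (ht : 0 < t) (hα : α ∈ Ioo (-π) π) :
    polarCoord.symm (t, α) ∈ convexHull ℝ {0, (h, s₁), (h, s₂)} ↔
      α ∈ Icc (arctan (s₁ / h)) (arctan (s₂ / h)) ∧ t * cos α ≤ h := by
  change (t * cos α, t * sin α) ∈ _ ↔ _
  rw [mem_convexHull_zero_mk_mk_iff hs]
  constructor
  · rintro ⟨θ, hθ, s, hs, hz⟩
    simp only [Prod.mk.injEq] at hz
    have hθ0 : 0 < θ := by
      rcases hθ.1.eq_or_lt with rfl | hθ0
      · have hcos : cos α = 0 := by simpa [ht.ne'] using hz.1.symm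
        have hsin : sin α = 0 := by simpa [ht.ne'] using hz.2.symm
        simpa [hcos, hsin] using sin_sq_add_cos_sq α
      · exact hθ0
    have hcos : 0 < cos α := pos_of_mul_pos_right (hz.1 ▸ mul_pos hθ0 hh) ht.le
    rw [mem_Icc_arctan_iff (mem_Ioo_neg_pi_div_two_of_cos_pos hα hcos), tan_eq_sin_div_cos]
    have htan : sin α / cos α = s / h := by
      rw [div_eq_div_iff hcos.ne' hh.ne']
      refine mul_left_cancel₀ ht.ne' ?_
      linear_combination (-h) * hz.2 + s * hz.1
    rw [htan]
    refine ⟨⟨by gcongr; exact hs.1, by gcongr; exact hs.2⟩, ?_⟩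
    nlinarith [hθ.2]
  · rintro ⟨hαI, htcos⟩
    have hα' : α ∈ Ioo (-(π / 2)) (π / 2) :=
      ⟨(neg_pi_div_two_lt_arctan _).trans_le hαI.1, hαI.2.trans_lt (arctan_lt_pi_div_two _)⟩
    have hcos := cos_pos_of_mem_Ioo hα'
    rw [mem_Icc_arctan_iff hα'] at hαI
    refine ⟨t * cos α / h, ⟨by positivity, (div_le_one hh).mpr htcos⟩, h * tan α, ?_, ?_⟩
    · exact ⟨(div_le_iff₀' hh).mp hαI.1, (le_div_iff₀' hh).mp hαI.2⟩
    · rw [tan_eq_sin_div_cos]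
      field_simp

theorem volume_real_convexHull_inter_disk {h s₁ s₂ ρ : ℝ} (hh : 0 < h) (hs : s₁ ≤ s₂)
    (hρ : 0 ≤ ρ) :
    volume.real (convexHull ℝ {0, (h, s₁), (h, s₂)} ∩ {z : ℝ × ℝ | z.1 ^ 2 + z.2 ^ 2 ≤ ρ ^ 2}) =
      ∫ α in arctan (s₁ / h)..arctan (s₂ / h), min ρ (h / cos α) ^ 2 / 2 := by
  have hcos : ∀ α ∈ Icc (arctan (s₁ / h)) (arctan (s₂ / h)), 0 < cos α := fun α hα =>
    cos_pos_of_mem_Ioo ⟨(neg_pi_div_two_lt_arctan _).trans_le hα.1,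
      hα.2.trans_lt (arctan_lt_pi_div_two _)⟩
  refine volume_real_eq_integral_of_polarCoord_symm_mem_iff
    (((Set.toFinite _).isClosed_convexHull ℝ).measurableSet.inter
      (isClosed_le (by fun_prop) (by fun_prop)).measurableSet)
    (by fun_prop) (fun α hα => le_min hρ (div_pos hh (hcos α hα)).le)
    (arctan_strictMono.monotone (by gcongr))
    (fun α hα => ⟨by linarith [neg_pi_div_two_lt_arctan (s₁ / h), hα.1, pi_pos],
      by linarith [arctan_lt_pi_div_two (s₂ / h), hα.2, pi_pos]⟩) fun t α ht hα => ?_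
  have hdisk : (t * cos α) ^ 2 + (t * sin α) ^ 2 ≤ ρ ^ 2 ↔ t ≤ ρ := by
    rw [mul_pow, mul_pow, ← mul_add, cos_sq_add_sin_sq, mul_one, sq_le_sq₀ ht.le hρ]
  rw [mem_inter_iff, polarCoord_symm_mem_convexHull_iff hh hs ht hα]
  change _ ∧ (t * cos α) ^ 2 + (t * sin α) ^ 2 ≤ ρ ^ 2 ↔ _
  rw [hdisk, le_min_iff]
  constructor
  · rintro ⟨⟨hαI, htcos⟩, htρ⟩
    exact ⟨hαI, htρ, (le_div_iff₀ (hcos α hαI)).mpr htcos⟩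
  · rintro ⟨hαI, htρ, htcos⟩
    exact ⟨⟨hαI, (le_div_iff₀ (hcos α hαI)).mp htcos⟩, htρ⟩

theorem monotoneOn_min_div_cos_sq {R h : ℝ} (hR : 0 ≤ R) (hh : 0 ≤ h) :
    MonotoneOn (fun α => min R (h / cos α) ^ 2 / 2) (Ico 0 (π / 2)) := by
  intro x hx y hy hxy
  have hcosy : 0 < cos y := cos_pos_of_mem_Ioo ⟨by linarith [hy.1, pi_pos], hy.2⟩
  have hcos : cos y ≤ cos x :=
    cos_le_cos_of_nonneg_of_le_pi hx.1 (by linarith [hy.2, pi_pos]) hxy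
  have hmin : 0 ≤ min R (h / cos x) := le_min hR (div_nonneg hh (hcosy.trans_le hcos).le)
  dsimp only
  gcongr

section PlaneCoords

variable {F : Type*} [NormedAddCommGroup F] [InnerProductSpace ℝ F] {x y : F}

def planeCoords (x y : F) : ℝ × ℝ →ₗ[ℝ] F :=
  (LinearMap.toSpanSingleton ℝ F x).coprod (LinearMap.toSpanSingleton ℝ F y)

@[simp]
theorem planeCoords_apply (x y : F) (z : ℝ × ℝ) : planeCoords x y z = z.1 • x + z.2 • y := rfl

theorem norm_planeCoords_sq (hv : Orthonormal ℝ ![x, y]) (z : ℝ × ℝ) :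
    ‖planeCoords x y z‖ ^ 2 = z.1 ^ 2 + z.2 ^ 2 := by
  have hx : ‖x‖ = 1 := hv.1 0
  have hy : ‖y‖ = 1 := hv.1 1
  have hxy : ⟪x, y⟫ = 0 := hv.2 (i := 0) (j := 1) (by decide)
  rw [planeCoords_apply, norm_add_sq_real, real_inner_smul_left, real_inner_smul_right, hxy,
    norm_smul, norm_smul, hx, hy]
  simp

theorem planeCoords_injective (hv : Orthonormal ℝ ![x, y]) :
    Function.Injective (planeCoords x y) := by
  refine (injective_iff_map_eq_zero _).mpr fun z hz => ?_
  have h := norm_planeCoords_sq hv z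
  rw [hz, norm_zero] at h
  exact Prod.ext (show z.1 = 0 by nlinarith [sq_nonneg z.1, sq_nonneg z.2])
    (show z.2 = 0 by nlinarith [sq_nonneg z.1, sq_nonneg z.2])

theorem planeCoords_preimage_closedBall (hv : Orthonormal ℝ ![x, y]) {ρ : ℝ} (hρ : 0 ≤ ρ) :
    planeCoords x y ⁻¹' closedBall 0 ρ = {z | z.1 ^ 2 + z.2 ^ 2 ≤ ρ ^ 2} := by
  ext z
  rw [mem_preimage, mem_closedBall_zero_iff, mem_ofPred_eq, ← norm_planeCoords_sq hv,
    sq_le_sq₀ (norm_nonneg _) hρ]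

variable [MeasurableSpace F] [BorelSpace F] [FiniteDimensional ℝ F]

theorem measurePreserving_planeCoords (hF : Module.finrank ℝ F = 2)
    (hv : Orthonormal ℝ ![x, y]) : MeasurePreserving (planeCoords x y) := by
  let b : OrthonormalBasis (Fin 2) ℝ F :=
    (basisOfOrthonormalOfCardEqFinrank hv (by simp [hF])).toOrthonormalBasis (by simpa using hv)
  have hb : ⇑b = ![x, y] := by simp [b]
  have : ⇑(planeCoords x y) = b.repr.symm ∘ MeasurableEquiv.toLp 2 (Fin 2 → ℝ) ∘
      (MeasurableEquiv.finTwoArrow (α := ℝ)).symm := by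
    ext z
    rw [Function.comp_apply, Function.comp_apply, ← b.sum_repr_symm, Fin.sum_univ_two, hb]
    simp
  rw [this]
  exact b.measurePreserving_repr_symm.comp
    ((EuclideanSpace.volume_preserving_symm_measurableEquiv_toLp (Fin 2)).symm.comp
      (volume_preserving_finTwoArrow ℝ).symm)

theorem volume_real_convexHull_inter_closedBall (hF : Module.finrank ℝ F = 2) {p u : F}
    (hp : p ≠ 0) (hu : ‖u‖ = 1) (hpu : ⟪p, u⟫ = 0) {s₁ s₂ ρ : ℝ} (hs : s₁ ≤ s₂) (hρ : 0 ≤ ρ) :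
    volume.real (convexHull ℝ {0, p + s₁ • u, p + s₂ • u} ∩ closedBall 0 ρ) =
      ∫ α in arctan (s₁ / ‖p‖)..arctan (s₂ / ‖p‖), min ρ (‖p‖ / cos α) ^ 2 / 2 := by
  have hpn : ‖p‖ ≠ 0 := norm_ne_zero_iff.mpr hp
  have hv : Orthonormal ℝ ![‖p‖⁻¹ • p, u] := by
    have hup : ⟪u, p⟫ = 0 := by rw [real_inner_comm, hpu]
    have hc : ‖‖p‖⁻¹ • p‖ = 1 := by rw [norm_smul, norm_inv, norm_norm, inv_mul_cancel₀ hpn]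
    rw [orthonormal_iff_ite]
    intro i j
    fin_cases i <;> fin_cases j <;>
      simp [real_inner_smul_left, real_inner_smul_right, hpu, hup, hc, hu]
  set e := planeCoords (‖p‖⁻¹ • p) u
  have he : ∀ s : ℝ, e (‖p‖, s) = p + s • u := fun s => by
    simp [e, smul_smul, hpn]
  have hhull : e ⁻¹' convexHull ℝ {0, p + s₁ • u, p + s₂ • u} =
      convexHull ℝ {0, (‖p‖, s₁), (‖p‖, s₂)} := by
    rw [← he, ← he, ← map_zero e, ← image_pair, ← image_insert_eq, ← LinearMap.image_convexHull,
      preimage_image_eq _ (planeCoords_injective hv)]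
  rw [← (measurePreserving_planeCoords hF hv).measureReal_preimage
    (((Set.toFinite _).isClosed_convexHull ℝ).measurableSet.inter
      isClosed_closedBall.measurableSet).nullMeasurableSet,
    preimage_inter, hhull, planeCoords_preimage_closedBall hv hρ,
    volume_real_convexHull_inter_disk (norm_pos_iff.mpr hp) hs hρ]

theorem volume_real_div_eq_div_interval_average (hF : Module.finrank ℝ F = 2) {p u : F}
    (hu : ‖u‖ = 1) (hpu : ⟪p, u⟫ = 0) {r R s₁ s₂ : ℝ} (hr : 0 < r) (hrp : r ≤ ‖p‖) (hrR : r ≤ R)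
    (hs : s₁ ≤ s₂) :
    volume.real (convexHull ℝ {0, p + s₁ • u, p + s₂ • u} ∩ closedBall 0 r) /
        volume.real (convexHull ℝ {0, p + s₁ • u, p + s₂ • u} ∩ closedBall 0 R) =
      (r ^ 2 / 2) /
        ⨍ α in arctan (s₁ / ‖p‖)..arctan (s₂ / ‖p‖), min R (‖p‖ / cos α) ^ 2 / 2 := by
  have hp : p ≠ 0 := norm_pos_iff.mp (hr.trans_le hrp)
  have hθ : arctan (s₁ / ‖p‖) ≤ arctan (s₂ / ‖p‖) := arctan_strictMono.monotone (by gcongr)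
  have hsector : ∫ α in arctan (s₁ / ‖p‖)..arctan (s₂ / ‖p‖), min r (‖p‖ / cos α) ^ 2 / 2 =
      (arctan (s₂ / ‖p‖) - arctan (s₁ / ‖p‖)) * (r ^ 2 / 2) := by
    rw [← smul_eq_mul, ← intervalIntegral.integral_const]
    refine integral_congr fun α hα => ?_
    rw [uIcc_of_le hθ] at hα
    have hcos : 0 < cos α := cos_pos_of_mem_Ioo
      ⟨(neg_pi_div_two_lt_arctan _).trans_le hα.1, hα.2.trans_lt (arctan_lt_pi_div_two _)⟩
    rw [min_eq_left (hrp.trans (le_div_self (norm_nonneg p) hcos (cos_le_one α)))]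
  rw [volume_real_convexHull_inter_closedBall hF hp hu hpu hs hr.le,
    volume_real_convexHull_inter_closedBall hF hp hu hpu hs (hr.le.trans hrR), hsector,
    interval_average_eq_div, div_div_eq_mul_div, mul_comm]

end PlaneCoords

/-- Monotonicity of the truncated density `ρ(B, T(s₁,s₂))` of triangles with apex at the
center of the disk `B`: for `0 < s₁ ≤ s₁' < s₂ ≤ s₂'`,
`ρ(B, T(s₁', s₂')) ≤ ρ(B, T(s₁, s₂))`, where `T(s₁,s₂) = conv{0, p + s₁u, p + s₂u}`,
`ρ(B, T) = area(T ∩ B)/area(T ∩ B_λ)`. -/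
theorem rho_antitone (r lam : ℝ) (hr : 0 < r) (hlam : 0 < lam)
    (p u : EuclideanSpace ℝ (Fin 2)) (hp : r ≤ ‖p‖) (hu : ‖u‖ = 1) (hpu : ⟪p, u⟫ = 0)
    (s₁ s₁' s₂ s₂' : ℝ) (h0 : 0 < s₁) (h1 : s₁ ≤ s₁') (h2 : s₁' < s₂) (h3 : s₂ ≤ s₂') :
    (volume (convexHull ℝ {0, p + s₁' • u, p + s₂' • u} ∩ closedBall 0 r)).toReal /
      (volume (convexHull ℝ {0, p + s₁' • u, p + s₂' • u} ∩
        closedBall 0 ((1 + lam) * r))).toReal ≤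
    (volume (convexHull ℝ {0, p + s₁ • u, p + s₂ • u} ∩ closedBall 0 r)).toReal /
      (volume (convexHull ℝ {0, p + s₁ • u, p + s₂ • u} ∩
        closedBall 0 ((1 + lam) * r))).toReal := by
  have hh : 0 < ‖p‖ := hr.trans_le hp
  have hR : r ≤ (1 + lam) * r := by nlinarith
  simp only [← measureReal_def]
  rw [volume_real_div_eq_div_interval_average finrank_euclideanSpace_fin hu hpu hr hp hR
      (h2.le.trans h3),
    volume_real_div_eq_div_interval_average finrank_euclideanSpace_fin hu hpu hr hp hR
      (h1.trans h2.le)]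
  have hθ : StrictMono fun s => arctan (s / ‖p‖) := fun _ _ h => arctan_strictMono (by gcongr)
  have hg := (monotoneOn_min_div_cos_sq (hr.le.trans hR) hh.le).mono
    ((Icc_subset_Ico_right (arctan_lt_pi_div_two (s₂' / ‖p‖))).trans
      (Ico_subset_Ico_left (arctan_nonneg.mpr (div_pos h0 hh).le)))
  have hg₁ : 0 < min ((1 + lam) * r) (‖p‖ / cos (arctan (s₁ / ‖p‖))) ^ 2 / 2 := by
    have := lt_min (hr.trans_le hR) (div_pos hh (cos_arctan_pos (s₁ / ‖p‖)))
    positivity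
  refine div_le_div_of_nonneg_left (by positivity) (hg₁.trans_le ?_)
    (hg.interval_average_mono (hθ.monotone h1) (hθ.monotone h3) (hθ (h1.trans_lt h2))
      (hθ (h2.trans_le h3)))
  exact (hg.mono (Icc_subset_Icc le_rfl (hθ.monotone h3))).le_interval_average
    (hθ (h1.trans_lt h2))
end

section
/- Let r > 0 and λ > 0, let p ∈ ℝ² with ‖p‖ ≥ r, and let u be a unit vector orthogonal to p. For s > 0 set p(s) := p + s·u, and for 0 < s₁ < s₂ let T(s₁, s₂) := conv{0, p(s₁), p(s₂)}. Then ρ̂(B, T(s₁, s₂)) is nonincreasing in each variable: for all 0 < s₁ ≤ s₁' < s₂ ≤ s₂' one has ρ̂(B, T(s₁, s₂)) ≥ ρ̂(B, T(s₁', s₂')). -/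
/-!
In the coordinates `(s, t) ↦ t • (p + s • u)`, whose Jacobian is `t ‖p‖`, the triangle
`T(a, b)` is `[a, b] × (0, 1]` and, for `R = (1 + λ) r`, `T(a, b) ∩ B_R` is the region under
the graph of `s ↦ min 1 (R / ‖p + s • u‖)` over `[a, b]`. Integrating `t ‖p‖` first in `t` gives
`area T(a, b) = ‖p‖ (b - a) / 2` and
`area (T(a, b) ∩ B_R) = ‖p‖ / 2 * ∫ₐᵇ min 1 (R / ‖p + s • u‖)²`,
so `ρ̂(B, T(a, b))` is the average over `[a, b]` of a function that is antitone for `s ≥ 0`,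
and such averages decrease when either endpoint moves to the right.
-/

open MeasureTheory Set Metric RealInnerProductSpace

local notation "ℝ²" => EuclideanSpace ℝ (Fin 2)

namespace AntitoneOn

variable {f : ℝ → ℝ} {a a' b b' c : ℝ}

theorem sub_mul_integral_le_sub_mul_integral (hf : AntitoneOn f (Icc a b)) (hac : a ≤ c)
    (hcb : c ≤ b) : (c - a) * ∫ x in c..b, f x ≤ (b - c) * ∫ x in a..c, f x := by
  have hright : ∫ x in c..b, f x ≤ (b - c) * f c := by
    have hf' : AntitoneOn f (uIcc c b) := hf.mono (by simp [uIcc_of_le hcb, Icc_subset_Icc hac])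
    simpa using intervalIntegral.integral_mono_on hcb (hf'.intervalIntegrable (μ := volume))
      intervalIntegrable_const fun x hx => hf ⟨hac, hcb⟩ ⟨hac.trans hx.1, hx.2⟩ hx.1
  have hleft : (c - a) * f c ≤ ∫ x in a..c, f x := by
    have hf' : AntitoneOn f (uIcc a c) :=
      hf.mono (by simp [uIcc_of_le hac, Icc_subset_Icc le_rfl hcb])
    simpa using intervalIntegral.integral_mono_on hac intervalIntegrable_const
      (hf'.intervalIntegrable (μ := volume)) fun x hx =>
        hf ⟨hx.1, hx.2.trans hcb⟩ ⟨hac, hcb⟩ hx.2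
  calc (c - a) * ∫ x in c..b, f x ≤ (c - a) * ((b - c) * f c) := by gcongr
    _ = (b - c) * ((c - a) * f c) := by ring
    _ ≤ (b - c) * ∫ x in a..c, f x := by gcongr

theorem intervalAverage_le_of_le_left (hf : AntitoneOn f (Icc a b)) (ha : a ≤ a')
    (hb : a' < b) : ⨍ x in a'..b, f x ≤ ⨍ x in a..b, f x := by
  have ha' : a' ∈ Icc a b := ⟨ha, hb.le⟩
  have hab : a ≤ b := ha.trans hb.le
  rw [interval_average_eq_div, interval_average_eq_div,
    div_le_div_iff₀ (by linarith) (by linarith),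
    ← intervalIntegral.integral_add_adjacent_intervals
      (hf.mono (uIcc_subset_Icc (left_mem_Icc.2 hab) ha')).intervalIntegrable
      (hf.mono (uIcc_subset_Icc ha' (right_mem_Icc.2 hab))).intervalIntegrable]
  linear_combination hf.sub_mul_integral_le_sub_mul_integral ha hb.le

theorem intervalAverage_le_of_le_right (hf : AntitoneOn f (Icc a b')) (ha : a < b)
    (hb : b ≤ b') : ⨍ x in a..b', f x ≤ ⨍ x in a..b, f x := by
  have hb' : b ∈ Icc a b' := ⟨ha.le, hb⟩
  have hab : a ≤ b' := ha.le.trans hb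
  rw [interval_average_eq_div, interval_average_eq_div,
    div_le_div_iff₀ (by linarith) (by linarith),
    ← intervalIntegral.integral_add_adjacent_intervals
      (hf.mono (uIcc_subset_Icc (left_mem_Icc.2 hab) hb')).intervalIntegrable
      (hf.mono (uIcc_subset_Icc hb' (right_mem_Icc.2 hab))).intervalIntegrable]
  linear_combination hf.sub_mul_integral_le_sub_mul_integral ha.le hb

theorem intervalAverage_le_intervalAverage (hf : AntitoneOn f (Icc a b')) (ha : a ≤ a')
    (hab : a' < b) (hb : b ≤ b') : ⨍ x in a'..b', f x ≤ ⨍ x in a..b, f x :=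
  calc ⨍ x in a'..b', f x ≤ ⨍ x in a'..b, f x :=
        (hf.mono (Icc_subset_Icc ha le_rfl)).intervalAverage_le_of_le_right hab hb
    _ ≤ ⨍ x in a..b, f x :=
        (hf.mono (Icc_subset_Icc le_rfl hb)).intervalAverage_le_of_le_left ha hab

end AntitoneOn

section Line

variable {V : Type*} [AddCommGroup V] [Module ℝ V]

theorem segment_eq_image_line (p u : V) {a b : ℝ} (hab : a ≤ b) :
    segment ℝ (p + a • u) (p + b • u) = (fun s : ℝ => p + s • u) '' Icc a b := by
  have := image_segment ℝ (LinearMap.toSpanSingleton ℝ V u).toAffineMap a b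
  simp only [LinearMap.coe_toAffineMap, LinearMap.toSpanSingleton_apply] at this
  rw [← segment_eq_Icc hab, ← image_image (fun v => p + v) (fun s : ℝ => s • u), this,
    segment_translate_image]

theorem mem_convexHull_triangle_iff (p u : V) {a b : ℝ} (hab : a ≤ b) {z : V} :
    z ∈ convexHull ℝ {0, p + a • u, p + b • u} ↔
      ∃ s ∈ Icc a b, ∃ t ∈ Icc (0 : ℝ) 1, t • (p + s • u) = z := by
  rw [convexHull_insert (insert_nonempty _ _), convexHull_pair, convexJoin_singleton_left,
    segment_eq_image_line p u hab]
  simp only [mem_iUnion, exists_prop, segment_eq_image, smul_zero, zero_add, mem_image,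
    exists_exists_and_eq_and]

end Line

section Orthogonal

variable {E : Type*} [NormedAddCommGroup E] [InnerProductSpace ℝ E] {p u : E}

theorem inner_add_smul_self_left (hpu : ⟪p, u⟫ = 0) (s : ℝ) : ⟪p + s • u, p⟫ = ‖p‖ ^ 2 := by
  rw [inner_add_left, real_inner_smul_left, real_inner_comm p u, hpu, mul_zero, add_zero,
    real_inner_self_eq_norm_sq]

theorem add_smul_ne_zero (hp : p ≠ 0) (hpu : ⟪p, u⟫ = 0) (s : ℝ) : p + s • u ≠ 0 := by
  intro h
  have := inner_add_smul_self_left hpu s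
  rw [h, inner_zero_left, eq_comm] at this
  exact hp (by simpa using this)

theorem norm_add_smul_sq (hu : ‖u‖ = 1) (hpu : ⟪p, u⟫ = 0) (s : ℝ) :
    ‖p + s • u‖ ^ 2 = ‖p‖ ^ 2 + s ^ 2 := by
  rw [sq, norm_add_sq_eq_norm_sq_add_norm_sq_real (by rw [real_inner_smul_right, hpu, mul_zero]),
    norm_smul, hu, Real.norm_eq_abs, mul_one, ← sq, ← sq, sq_abs]

theorem antitoneOn_min_one_div_norm_add_smul_sq (hp : p ≠ 0) (hu : ‖u‖ = 1) (hpu : ⟪p, u⟫ = 0)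
    {R : ℝ} (hR : 0 ≤ R) : AntitoneOn (fun s : ℝ => min 1 (R / ‖p + s • u‖) ^ 2) (Ici 0) := by
  intro s hs s' hs' hss'
  have hnorm : ‖p + s • u‖ ≤ ‖p + s' • u‖ := by
    rw [← sq_le_sq₀ (norm_nonneg _) (norm_nonneg _), norm_add_smul_sq hu hpu,
      norm_add_smul_sq hu hpu]
    gcongr
  dsimp only
  gcongr
  exact norm_pos_iff.2 (add_smul_ne_zero hp hpu s)

end Orthogonal

theorem measurableSet_subgraph {a b : ℝ} {g : ℝ → ℝ} (hg : Measurable g) :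
    MeasurableSet {z : ℝ × ℝ | z.1 ∈ Icc a b ∧ z.2 ∈ Ioc 0 (g z.1)} :=
  (measurable_fst measurableSet_Icc).inter
    ((measurableSet_lt measurable_const measurable_snd).inter
      (measurableSet_le measurable_snd (hg.comp measurable_fst)))

theorem lintegral_subgraph_snd {a b : ℝ} (hab : a ≤ b) {g : ℝ → ℝ} (hg : Continuous g)
    (hg₀ : ∀ s, 0 ≤ g s) :
    ∫⁻ z in {z : ℝ × ℝ | z.1 ∈ Icc a b ∧ z.2 ∈ Ioc 0 (g z.1)}, ENNReal.ofReal z.2 =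
      ENNReal.ofReal ((∫ s in a..b, g s ^ 2) / 2) := by
  set A := {z : ℝ × ℝ | z.1 ∈ Icc a b ∧ z.2 ∈ Ioc 0 (g z.1)}
  have hA : MeasurableSet A := measurableSet_subgraph hg.measurable
  have hfiber (c : ℝ) (hc : 0 ≤ c) :
      ∫⁻ y in Ioc 0 c, ENNReal.ofReal y = ENNReal.ofReal (c ^ 2 / 2) := by
    rw [← ofReal_integral_eq_lintegral_ofReal
        (continuous_id.integrableOn_Ioc (f := fun y : ℝ => y)) ?_,
      ← intervalIntegral.integral_of_le hc, integral_id]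
    · ring_nf
    · exact (ae_restrict_iff' measurableSet_Ioc).2 (ae_of_all _ fun y hy => hy.1.le)
  have hslice (x : ℝ) : ∫⁻ y, A.indicator (fun z => ENNReal.ofReal z.2) (x, y) =
      (Icc a b).indicator (fun x => ENNReal.ofReal (g x ^ 2 / 2)) x := by
    by_cases hx : x ∈ Icc a b
    · rw [indicator_of_mem hx, ← hfiber _ (hg₀ x), ← lintegral_indicator measurableSet_Ioc]
      congr 1 with y
      by_cases hy : y ∈ Ioc 0 (g x)
      · rw [indicator_of_mem hy, indicator_of_mem (show (x, y) ∈ A from ⟨hx, hy⟩)]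
      · rw [indicator_of_notMem hy, indicator_of_notMem fun h => hy h.2]
    · simp only [indicator_of_notMem hx, indicator_of_notMem fun h : (x, _) ∈ A => hx h.1,
        lintegral_zero]
  rw [← lintegral_indicator hA, Measure.volume_eq_prod,
    lintegral_prod _ (measurable_snd.ennreal_ofReal.indicator hA).aemeasurable]
  simp_rw [hslice]
  rw [lintegral_indicator measurableSet_Icc, ← ofReal_integral_eq_lintegral_ofReal
      (by fun_prop : Continuous fun x => g x ^ 2 / 2).integrableOn_Icc
      (ae_of_all _ fun x => by positivity), integral_Icc_eq_integral_Ioc,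
    ← intervalIntegral.integral_of_le hab, intervalIntegral.integral_div]

section FanMap

variable {p u : ℝ²}

theorem abs_cross_eq_norm (hu : ‖u‖ = 1) (hpu : ⟪p, u⟫ = 0) :
    |u 0 * p 1 - u 1 * p 0| = ‖p‖ := by
  have hp : ‖p‖ ^ 2 = p 0 ^ 2 + p 1 ^ 2 := by
    simp [EuclideanSpace.real_norm_sq_eq, Fin.sum_univ_two]
  have hu' : u 0 ^ 2 + u 1 ^ 2 = 1 := by
    simpa [Fin.sum_univ_two, hu] using (EuclideanSpace.real_norm_sq_eq u).symm
  have hpu' : p 0 * u 0 + p 1 * u 1 = 0 := by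
    simpa [PiLp.inner_apply, Fin.sum_univ_two, mul_comm] using hpu
  rw [← Real.sqrt_sq_eq_abs, ← Real.sqrt_sq (norm_nonneg p)]
  congr 1
  -- Lagrange's identity for `u` and `p`
  linear_combination (p 0 ^ 2 + p 1 ^ 2) * hu' - hp - (p 0 * u 0 + p 1 * u 1) * hpu'

/-- The parameters `(s, t)` live in `ℝ²` itself, as `(x 0, x 1)`, because the change of variables
formula `lintegral_abs_det_fderiv_eq_addHaar_image` is stated for self-maps. -/
noncomputable def fanMap (p u : ℝ²) (x : ℝ²) : ℝ² := x 1 • (p + x 0 • u)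

noncomputable def fanMapDeriv (p u : ℝ²) (x : ℝ²) : ℝ² →L[ℝ] ℝ² :=
  x 1 • (EuclideanSpace.proj (0 : Fin 2)).smulRight u +
    (EuclideanSpace.proj (1 : Fin 2)).smulRight (p + x 0 • u)

theorem hasFDerivAt_fanMap (p u x : ℝ²) : HasFDerivAt (fanMap p u) (fanMapDeriv p u x) x := by
  have h0 : HasFDerivAt (fun y : ℝ² => y 0) (EuclideanSpace.proj (0 : Fin 2) : ℝ² →L[ℝ] ℝ) x :=
    (EuclideanSpace.proj (0 : Fin 2) : ℝ² →L[ℝ] ℝ).hasFDerivAt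
  have h1 : HasFDerivAt (fun y : ℝ² => y 1) (EuclideanSpace.proj (1 : Fin 2) : ℝ² →L[ℝ] ℝ) x :=
    (EuclideanSpace.proj (1 : Fin 2) : ℝ² →L[ℝ] ℝ).hasFDerivAt
  exact h1.smul ((h0.smul_const u).const_add p)

theorem det_fanMapDeriv (p u x : ℝ²) :
    (fanMapDeriv p u x).det = x 1 * (u 0 * p 1 - u 1 * p 0) := by
  rw [ContinuousLinearMap.det, ← LinearMap.det_toMatrix (PiLp.basisFun 2 ℝ (Fin 2)),
    Matrix.det_fin_two]
  simp [LinearMap.toMatrix_apply, fanMapDeriv]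
  ring

theorem injOn_fanMap (hp : p ≠ 0) (hu : u ≠ 0) (hpu : ⟪p, u⟫ = 0) :
    InjOn (fanMap p u) {x | 0 < x 1} := by
  intro x hx y hy h
  have h1 : x 1 = y 1 := by
    have := congrArg (⟪·, p⟫) h
    simp only [fanMap, real_inner_smul_left, inner_add_smul_self_left hpu] at this
    exact mul_right_cancel₀ (by positivity) this
  have h0 : x 0 = y 0 := by
    rw [fanMap, fanMap, ← h1] at h
    exact smul_left_injective ℝ hu (add_left_cancel (smul_right_injective _ hx.ne' h))
  ext i
  fin_cases i
  exacts [h0, h1]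

theorem volume_image_fanMap (hp : p ≠ 0) (hu : ‖u‖ = 1) (hpu : ⟪p, u⟫ = 0) {S : Set ℝ²}
    (hS : MeasurableSet S) (hS₁ : ∀ x ∈ S, 0 < x 1) :
    volume (fanMap p u '' S) = ∫⁻ x in S, ENNReal.ofReal (‖p‖ * x 1) := by
  rw [← lintegral_abs_det_fderiv_eq_addHaar_image volume hS
    (fun x _ => (hasFDerivAt_fanMap p u x).hasFDerivWithinAt)
    ((injOn_fanMap hp (norm_ne_zero_iff.1 (hu ▸ one_ne_zero)) hpu).mono hS₁)]
  refine setLIntegral_congr_fun hS fun x hx => ?_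
  rw [det_fanMapDeriv, abs_mul, abs_cross_eq_norm hu hpu, abs_of_pos (hS₁ x hx), mul_comm]

theorem volume_image_fanMap_subgraph (hp : p ≠ 0) (hu : ‖u‖ = 1) (hpu : ⟪p, u⟫ = 0) {a b : ℝ}
    (hab : a ≤ b) {g : ℝ → ℝ} (hg : Continuous g) (hg₀ : ∀ s, 0 ≤ g s) :
    volume (fanMap p u '' {x | x 0 ∈ Icc a b ∧ x 1 ∈ Ioc 0 (g (x 0))}) =
      ENNReal.ofReal (‖p‖ / 2 * ∫ s in a..b, g s ^ 2) := by
  have hcoord : MeasurePreserving (fun x : ℝ² => (x 0, x 1)) :=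
    (volume_preserving_finTwoArrow ℝ).comp (PiLp.volume_preserving_ofLp (Fin 2))
  have hA := measurableSet_subgraph (a := a) (b := b) hg.measurable
  have hS : MeasurableSet {x : ℝ² | x 0 ∈ Icc a b ∧ x 1 ∈ Ioc 0 (g (x 0))} :=
    hcoord.measurable hA
  have hsnd : ∫⁻ x in {x : ℝ² | x 0 ∈ Icc a b ∧ x 1 ∈ Ioc 0 (g (x 0))}, ENNReal.ofReal (x 1) =
      ∫⁻ z in {z : ℝ × ℝ | z.1 ∈ Icc a b ∧ z.2 ∈ Ioc 0 (g z.1)}, ENNReal.ofReal z.2 :=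
    hcoord.setLIntegral_comp_preimage hA (f := fun z : ℝ × ℝ => ENNReal.ofReal z.2)
      (by fun_prop)
  rw [volume_image_fanMap hp hu hpu hS fun x hx => hx.2.1]
  simp_rw [ENNReal.ofReal_mul (norm_nonneg p)]
  rw [lintegral_const_mul _ (by fun_prop), hsnd, lintegral_subgraph_snd hab hg hg₀,
    ← ENNReal.ofReal_mul (norm_nonneg p)]
  ring_nf

end FanMap

section Triangle

variable {p u : ℝ²} {a b : ℝ}

theorem image_fanMap_subgraph_eq (hp : p ≠ 0) (hpu : ⟪p, u⟫ = 0) (hab : a ≤ b) {C : Set ℝ²}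
    {g : ℝ → ℝ} (hgC : ∀ s ∈ Icc a b, ∀ t, 0 < t → (t ≤ g s ↔ t ≤ 1 ∧ t • (p + s • u) ∈ C)) :
    fanMap p u '' {x | x 0 ∈ Icc a b ∧ x 1 ∈ Ioc 0 (g (x 0))} =
      (convexHull ℝ {0, p + a • u, p + b • u} ∩ C) \ {0} := by
  ext z
  simp only [mem_image, mem_sdiff, mem_inter_iff, mem_singleton_iff, mem_ofPred_eq,
    mem_convexHull_triangle_iff p u hab]
  constructor
  · rintro ⟨x, ⟨hs, ht, htg⟩, rfl⟩
    obtain ⟨ht1, hC⟩ := (hgC _ hs _ ht).1 htg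
    exact ⟨⟨⟨x 0, hs, x 1, ⟨ht.le, ht1⟩, rfl⟩, hC⟩,
      smul_ne_zero ht.ne' (add_smul_ne_zero hp hpu _)⟩
  · rintro ⟨⟨⟨s, hs, t, ht, rfl⟩, hC⟩, hz⟩
    have ht₀ : 0 < t := ht.1.lt_of_ne (by rintro rfl; simp at hz)
    exact ⟨!₂[s, t], ⟨hs, ht₀, (hgC s hs t ht₀).2 ⟨ht.2, hC⟩⟩, rfl⟩

theorem volume_convexHull_triangle_inter (hp : p ≠ 0) (hu : ‖u‖ = 1) (hpu : ⟪p, u⟫ = 0)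
    (hab : a ≤ b) {C : Set ℝ²} {g : ℝ → ℝ} (hg : Continuous g) (hg₀ : ∀ s, 0 ≤ g s)
    (hgC : ∀ s ∈ Icc a b, ∀ t, 0 < t → (t ≤ g s ↔ t ≤ 1 ∧ t • (p + s • u) ∈ C)) :
    volume (convexHull ℝ {0, p + a • u, p + b • u} ∩ C) =
      ENNReal.ofReal (‖p‖ / 2 * ∫ s in a..b, g s ^ 2) := by
  rw [← measure_sdiff_null (measure_singleton 0), ← image_fanMap_subgraph_eq hp hpu hab hgC,
    volume_image_fanMap_subgraph hp hu hpu hab hg hg₀]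

theorem volume_convexHull_triangle (hp : p ≠ 0) (hu : ‖u‖ = 1) (hpu : ⟪p, u⟫ = 0)
    (hab : a ≤ b) :
    volume (convexHull ℝ {0, p + a • u, p + b • u}) = ENNReal.ofReal (‖p‖ / 2 * (b - a)) := by
  simpa using volume_convexHull_triangle_inter (C := univ) hp hu hpu hab continuous_const
    (fun _ => zero_le_one) fun s _ t _ => by simp

theorem volume_convexHull_triangle_inter_closedBall (hp : p ≠ 0) (hu : ‖u‖ = 1)
    (hpu : ⟪p, u⟫ = 0) (hab : a ≤ b) {R : ℝ} (hR : 0 ≤ R) :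
    volume (convexHull ℝ {0, p + a • u, p + b • u} ∩ closedBall 0 R) =
      ENNReal.ofReal (‖p‖ / 2 * ∫ s in a..b, min 1 (R / ‖p + s • u‖) ^ 2) := by
  have hnorm (s : ℝ) : 0 < ‖p + s • u‖ := norm_pos_iff.2 (add_smul_ne_zero hp hpu s)
  refine volume_convexHull_triangle_inter hp hu hpu hab ?_ (fun s => by positivity) ?_
  · exact continuous_const.min (continuous_const.div (by fun_prop) fun s => (hnorm s).ne')
  · intro s _ t ht
    rw [le_min_iff, le_div_iff₀ (hnorm s), mem_closedBall_zero_iff, norm_smul,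
      Real.norm_of_nonneg ht.le]

theorem convexHull_triangle_density_eq (hp : p ≠ 0) (hu : ‖u‖ = 1) (hpu : ⟪p, u⟫ = 0)
    (hab : a < b) {R : ℝ} (hR : 0 ≤ R) :
    (volume (convexHull ℝ {0, p + a • u, p + b • u} ∩ closedBall 0 R)).toReal /
        (volume (convexHull ℝ ({0, p + a • u, p + b • u} : Set ℝ²))).toReal =
      ⨍ s in a..b, min 1 (R / ‖p + s • u‖) ^ 2 := by
  have hp' : 0 < ‖p‖ := norm_pos_iff.2 hp
  have hint : 0 ≤ ∫ s in a..b, min 1 (R / ‖p + s • u‖) ^ 2 :=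
    intervalIntegral.integral_nonneg hab.le fun s _ => sq_nonneg _
  rw [volume_convexHull_triangle_inter_closedBall hp hu hpu hab.le hR,
    volume_convexHull_triangle hp hu hpu hab.le, ENNReal.toReal_ofReal (by positivity),
    ENNReal.toReal_ofReal (mul_nonneg (by positivity) (sub_nonneg.2 hab.le)),
    interval_average_eq_div]
  field_simp

end Triangle

/-- Monotonicity of the soft density `ρ̂(B, T(s₁,s₂))` of triangles with apex at the center of
the disk `B`: for `0 < s₁ ≤ s₁' < s₂ ≤ s₂'`, `ρ̂(B, T(s₁', s₂')) ≤ ρ̂(B, T(s₁, s₂))`, where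
`T(s₁,s₂) = conv{0, p + s₁u, p + s₂u}` and `ρ̂(B, T) = area(T ∩ B_λ)/area(T)`. -/
theorem rhoHat_antitone (r lam : ℝ) (hr : 0 < r) (hlam : 0 < lam)
    (p u : EuclideanSpace ℝ (Fin 2)) (hp : r ≤ ‖p‖) (hu : ‖u‖ = 1) (hpu : ⟪p, u⟫ = 0)
    (s₁ s₁' s₂ s₂' : ℝ) (h0 : 0 < s₁) (h1 : s₁ ≤ s₁') (h2 : s₁' < s₂) (h3 : s₂ ≤ s₂') :
    (volume (convexHull ℝ {0, p + s₁' • u, p + s₂' • u} ∩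
        closedBall 0 ((1 + lam) * r))).toReal /
      (volume (convexHull ℝ ({0, p + s₁' • u, p + s₂' • u} :
        Set (EuclideanSpace ℝ (Fin 2))))).toReal ≤
    (volume (convexHull ℝ {0, p + s₁ • u, p + s₂ • u} ∩
        closedBall 0 ((1 + lam) * r))).toReal /
      (volume (convexHull ℝ ({0, p + s₁ • u, p + s₂ • u} :
        Set (EuclideanSpace ℝ (Fin 2))))).toReal := by
  have hp₀ : p ≠ 0 := norm_pos_iff.1 (hr.trans_le hp)
  have hR : 0 ≤ (1 + lam) * r := by positivity
  rw [convexHull_triangle_density_eq hp₀ hu hpu (h2.trans_le h3) hR,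
    convexHull_triangle_density_eq hp₀ hu hpu (h1.trans_lt h2) hR]
  exact ((antitoneOn_min_one_div_norm_add_smul_sq hp₀ hu hpu hR).mono
    fun s hs => h0.le.trans hs.1).intervalAverage_le_intervalAverage h1 h2 h3
end
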